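/- arXiv:1509.02037 — 2 statements merged into one kernel-verified Lean document; each statement's English description precedes it below -/
import Mathlib

section
/- The state |ψ₂⟩ = (1/√3)(|↑↑0⟩ + |↓0↓⟩ + |0↓↑⟩) of two delocalized spin-1/2 particles in three modes has all three single-mode reduced density matrices equal to (1/3)·I₃; that is, |ψ₂⟩ is maximally entangled. -/
open Finset

/-- Reduced density matrix of mode A (trace out B and C). -/
noncomputable def rhoA (m : Fin 3 → Fin 3 → Fin 3 → ℂ) : Matrix (Fin 3) (Fin 3) ℂ :=
  fun a a' => ∑ j : Fin 3, ∑ k : Fin 3, m a j k * (starRingEnd ℂ) (m a' j k)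

/-- Reduced density matrix of mode B (trace out A and C). -/
noncomputable def rhoB (m : Fin 3 → Fin 3 → Fin 3 → ℂ) : Matrix (Fin 3) (Fin 3) ℂ :=
  fun b b' => ∑ i : Fin 3, ∑ k : Fin 3, m i b k * (starRingEnd ℂ) (m i b' k)

/-- Reduced density matrix of mode C (trace out A and B). -/
noncomputable def rhoC (m : Fin 3 → Fin 3 → Fin 3 → ℂ) : Matrix (Fin 3) (Fin 3) ℂ :=
  fun c c' => ∑ i : Fin 3, ∑ j : Fin 3, m i j c * (starRingEnd ℂ) (m i j c')

/-- `|ψ₂⟩ = (1/√3)(|↑↑0⟩ + |↓0↓⟩ + |0↓↑⟩)`, with `↑ = 0`, `↓ = 1`, empty `= 2`. -/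
noncomputable def psi2 : Fin 3 → Fin 3 → Fin 3 → ℂ := fun i j k =>
  if (i, j, k) = (0, 0, 2) ∨ (i, j, k) = (1, 2, 1) ∨ (i, j, k) = (2, 1, 0) then
    ((Real.sqrt 3 : ℝ) : ℂ)⁻¹ else 0

lemma key : ((Real.sqrt 3 : ℝ) : ℂ)⁻¹ * ((Real.sqrt 3 : ℝ) : ℂ)⁻¹ = (3 : ℂ)⁻¹ := by
  rw [← mul_inv, ← Complex.ofReal_mul, Real.mul_self_sqrt (by norm_num)]
  norm_num

theorem stmt_8 :
    rhoA psi2 = ((3 : ℂ)⁻¹) • (1 : Matrix (Fin 3) (Fin 3) ℂ) ∧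
    rhoB psi2 = ((3 : ℂ)⁻¹) • (1 : Matrix (Fin 3) (Fin 3) ℂ) ∧
    rhoC psi2 = ((3 : ℂ)⁻¹) • (1 : Matrix (Fin 3) (Fin 3) ℂ) := by
  refine ⟨?_, ?_, ?_⟩ <;>
  · funext a b
    fin_cases a <;> fin_cases b <;>
      simp [rhoA, rhoB, rhoC, psi2, Fin.sum_univ_three, Matrix.smul_apply, Matrix.one_apply,
        key, Prod.ext_iff]
end

section
/- The polynomial I₂ in the amplitudes m_{ijk}, expressed via I₂ = i·Tr(M_{AB}·σ_y·M_{BC}·σ_y·M_{AC}ᵀ·σ_y), is invariant under the simultaneous replacement M_{AB} ↦ A·M_{AB}·Bᵀ, M_{BC} ↦ B·M_{BC}·Cᵀ, M_{AC} ↦ A·M_{AC}·Cᵀ for arbitrary A, B, C ∈ SL(2,ℂ). -/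
open Matrix Complex

noncomputable def sigmaY : Matrix (Fin 2) (Fin 2) ℂ := !![0, -I; I, 0]

lemma sigmaY_conj (S : Matrix.SpecialLinearGroup (Fin 2) ℂ) :
    (S : Matrix (Fin 2) (Fin 2) ℂ)ᵀ * sigmaY * (S : Matrix (Fin 2) (Fin 2) ℂ) = sigmaY := by
  obtain ⟨S, hdet⟩ := S
  rw [Matrix.det_fin_two] at hdet
  simp only [Matrix.SpecialLinearGroup.coe_mk]
  rw [Matrix.eta_fin_two Sᵀ]
  simp only [Matrix.transpose_apply]
  rw [Matrix.eta_fin_two S]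
  simp only [sigmaY, Matrix.mul_fin_two, Matrix.cons_val_zero, Matrix.cons_val_one,
    Matrix.head_cons, Matrix.of_apply]
  ext i j
  fin_cases i <;> fin_cases j <;> simp <;>
    first
      | ring1
      | linear_combination (-I) * hdet
      | linear_combination I * hdet

theorem stmt_14 (MAB MBC MAC : Matrix (Fin 2) (Fin 2) ℂ)
    (A B C : Matrix.SpecialLinearGroup (Fin 2) ℂ) :
    I * (((A : Matrix (Fin 2) (Fin 2) ℂ) * MAB * (B : Matrix (Fin 2) (Fin 2) ℂ)ᵀ) * sigmaY *
        ((B : Matrix (Fin 2) (Fin 2) ℂ) * MBC * (C : Matrix (Fin 2) (Fin 2) ℂ)ᵀ) * sigmaY *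
        ((A : Matrix (Fin 2) (Fin 2) ℂ) * MAC * (C : Matrix (Fin 2) (Fin 2) ℂ)ᵀ)ᵀ * sigmaY).trace
      = I * (MAB * sigmaY * MBC * sigmaY * MACᵀ * sigmaY).trace := by
  set a := (A : Matrix (Fin 2) (Fin 2) ℂ) with ha
  set b := (B : Matrix (Fin 2) (Fin 2) ℂ) with hb
  set c := (C : Matrix (Fin 2) (Fin 2) ℂ) with hc
  have hB' : ∀ X : Matrix (Fin 2) (Fin 2) ℂ, bᵀ * (sigmaY * (b * X)) = sigmaY * X := by
    intro X
    rw [← Matrix.mul_assoc, ← Matrix.mul_assoc, sigmaY_conj B]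
  have hC' : ∀ X : Matrix (Fin 2) (Fin 2) ℂ, cᵀ * (sigmaY * (c * X)) = sigmaY * X := by
    intro X
    rw [← Matrix.mul_assoc, ← Matrix.mul_assoc, sigmaY_conj C]
  have hA' : aᵀ * (sigmaY * a) = sigmaY := by
    rw [← Matrix.mul_assoc, sigmaY_conj A]
  refine congrArg (I * ·) ?_
  rw [Matrix.transpose_mul, Matrix.transpose_mul, Matrix.transpose_transpose]
  simp only [Matrix.mul_assoc]
  rw [hB', hC', Matrix.trace_mul_comm]
  simp only [Matrix.mul_assoc]
  rw [hA']
end
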